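/- Let d ≥ 2 be an even integer and Θ = (X₁,X₂) a d-small symbol with defining intervals, right region in row r, left region in row l = 3 − r, and middle region of cardinality kd. Let w be the number of letters ∧ and h the number of letters ∨ in w_ud(Θ). Then the following are equivalent: (i) w_ud(Θ) = ×^α ∧^w ∨^h ∘^β for some α, β ≥ 0 (all ×'s first, then all ∧'s, then all ∨'s, then all ∘'s); (ii) λ(X_r) is the empty partition, λ(X_l) is the rectangular partition with h parts all equal to w, and s(X_r) = s(X_l) + w − h + kd + d/2. -/

import Mathlib

open scoped Classical

/-- A β-set: a set of integers containing all sufficiently small integers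
and no sufficiently large ones. -/
def IsBetaSet (X : Set ℤ) : Prop :=
  (∃ c : ℤ, ∀ z : ℤ, z < c → z ∈ X) ∧ (∃ C : ℤ, ∀ z : ℤ, C ≤ z → z ∉ X)

/-- `topB X = max X`. -/
noncomputable def topB (X : Set ℤ) : ℤ := sSup X

/-- `botB X = max {z | every integer < z lies in X}`. -/
noncomputable def botB (X : Set ℤ) : ℤ := sSup {z : ℤ | ∀ w : ℤ, w < z → w ∈ X}

/-- The charge `s(X)` of a β-set `X`, computed with the cutoff `c = botB X`. -/
noncomputable def chargeB (X : Set ℤ) : ℤ :=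
  ((X ∩ Set.Ici (botB X)).ncard : ℤ) + botB X - 1

/-- `elemSeq X j` is the `(j+1)`-st largest element of the β-set `X`. -/
noncomputable def elemSeq (X : Set ℤ) : ℕ → ℤ
  | 0 => sSup X
  | n + 1 => sSup (X ∩ Set.Iio (elemSeq X n))

/-- The partition `λ(X)` of a β-set `X`, `0`-indexed: `partB X j = λ_{j+1}`,
recovered from `x_j = s(X) + λ_j - j + 1` where `x_j` is the `j`-th largest element. -/
noncomputable def partB (X : Set ℤ) (j : ℕ) : ℕ :=
  (elemSeq X j - chargeB X + j).toNat

/-- The size `|λ(X)|` of the partition of a β-set `X`. -/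
noncomputable def sizeB (X : Set ℤ) : ℕ := ∑ᶠ j : ℕ, partB X j

/-- A partition, encoded as a weakly decreasing eventually zero function (0-indexed). -/
def IsPartition (μ : ℕ → ℕ) : Prop :=
  (∀ j, μ (j + 1) ≤ μ j) ∧ ∃ N, ∀ j, N ≤ j → μ j = 0

/-- The β-set `{s + λ_j - j + 1 : j ≥ 1}` of the partition `μ` with charge `s`. -/
def betaOf (μ : ℕ → ℕ) (s : ℤ) : Set ℤ :=
  {x : ℤ | ∃ j : ℕ, x = s + (μ j : ℤ) - (j : ℤ)}

/-- The symbol `Θ = (X₁, X₂)` is `d`-small with defining intervals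
`I₁ = [a₁,b₁]` and `I₂ = [a₂,b₂]`. -/
structure IsDSmallWith (d : ℤ) (X₁ X₂ : Set ℤ) (a₁ b₁ a₂ b₂ : ℤ) : Prop where
  len₁ : b₁ - a₁ = d / 2 - 1
  len₂ : b₂ - a₂ = d / 2 - 1
  bot₁ : a₁ ≤ botB X₁
  bot₂ : a₂ ≤ botB X₂
  top₁ : topB X₁ ≤ b₁
  top₂ : topB X₂ ≤ b₂
  cong : d ∣ b₂ - (b₁ + d / 2)

/-- The symbol `Θ = (X₁, X₂)` is `d`-small: it admits some pair of defining intervals. -/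
def IsDSmall (d : ℤ) (X₁ X₂ : Set ℤ) : Prop :=
  ∃ a₁ b₁ a₂ b₂ : ℤ, IsDSmallWith d X₁ X₂ a₁ b₁ a₂ b₂

/-- The row (`1` or `2`) containing the right region. -/
def rightRow (b₁ b₂ : ℤ) : ℕ := if b₁ < b₂ then 2 else 1

/-- The row, as a β-set, containing the right region. -/
def rightSet (X₁ X₂ : Set ℤ) (b₁ b₂ : ℤ) : Set ℤ := if b₁ < b₂ then X₂ else X₁

/-- The row, as a β-set, containing the left region. -/
def leftSet (X₁ X₂ : Set ℤ) (b₁ b₂ : ℤ) : Set ℤ := if b₁ < b₂ then X₁ else X₂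

/-- The cardinality `kd` of the middle region. -/
def middleLen (d b₁ b₂ : ℤ) : ℤ := |b₂ - b₁| - d / 2

/-- The alphabet `{∧, ∨, ×, ∘}` of up-down diagrams: `up = ∧`, `dn = ∨`,
`cross = ×`, `circ = ∘`. -/
inductive UD : Type
  | up
  | dn
  | cross
  | circ
deriving DecidableEq

/-- The up-down diagram `w_ud(Θ)` of a `d`-small symbol with defining intervals:
`wud d X₁ X₂ b₁ b₂ i` is the letter `w_i` for `1 ≤ i ≤ d/2`.  Here the right
region is `[m+1, m+d/2]` with `m = max b₁ b₂ - d/2`, `β_i = m + i`, and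
`β_i - kd - d/2 = β_i - |b₂ - b₁|`. -/
noncomputable def wud (d : ℤ) (X₁ X₂ : Set ℤ) (b₁ b₂ : ℤ) (i : ℤ) : UD :=
  if (max b₁ b₂ - d / 2 + i) ∈ rightSet X₁ X₂ b₁ b₂ then
    if (max b₁ b₂ - d / 2 + i) - |b₂ - b₁| ∈ leftSet X₁ X₂ b₁ b₂ then UD.cross else UD.up
  else
    if (max b₁ b₂ - d / 2 + i) - |b₂ - b₁| ∈ leftSet X₁ X₂ b₁ b₂ then UD.dn else UD.circ

/-- Removing an `e`-cohook in row `1` (the rows get interchanged afterwards). -/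
def RemoveCohookRow1 (e : ℤ) (Θ Θ' : Set ℤ × Set ℤ) : Prop :=
  ∃ x : ℤ, x ∈ Θ.1 ∧ x - e ∉ Θ.2 ∧ Θ' = (Θ.2 ∪ {x - e}, Θ.1 \ {x})

/-- Removing an `e`-cohook in row `2` (the rows get interchanged afterwards). -/
def RemoveCohookRow2 (e : ℤ) (Θ Θ' : Set ℤ × Set ℤ) : Prop :=
  ∃ x : ℤ, x ∈ Θ.2 ∧ x - e ∉ Θ.1 ∧ Θ' = (Θ.2 \ {x}, Θ.1 ∪ {x - e})

/-- Removing an `e`-cohook. -/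
def RemoveCohook (e : ℤ) (Θ Θ' : Set ℤ × Set ℤ) : Prop :=
  RemoveCohookRow1 e Θ Θ' ∨ RemoveCohookRow2 e Θ Θ'

/-- The symbol `Θ` has an `e`-cohook. -/
def HasCohook (e : ℤ) (Θ : Set ℤ × Set ℤ) : Prop :=
  (∃ x : ℤ, x ∈ Θ.1 ∧ x - e ∉ Θ.2) ∨ (∃ x : ℤ, x ∈ Θ.2 ∧ x - e ∉ Θ.1)

/-- `C` is an `e`-cocore of `Θ`: a symbol with no `e`-cohooks obtained from `Θ`
by a finite sequence of `e`-cohook removals. -/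
def IsCocoreOf (e : ℤ) (Θ C : Set ℤ × Set ℤ) : Prop :=
  Relation.ReflTransGen (RemoveCohook e) Θ C ∧ ¬ HasCohook e C

/-- The `n`-fold composition of a relation. -/
def RelPow {α : Type*} (R : α → α → Prop) : ℕ → α → α → Prop
  | 0 => Eq
  | n + 1 => fun a c => ∃ b, R a b ∧ RelPow R n b c

/-- `(a, b)` (row `a`, column `b`, both `1`-indexed) is a box of the partition `μ`
(`μ` is `0`-indexed, so `μ (a-1)` is the `a`-th part `λ_a`). -/
def IsBox (μ : ℕ → ℕ) (a b : ℕ) : Prop := 1 ≤ a ∧ 1 ≤ b ∧ b ≤ μ (a - 1)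

/-- `(a, b)` is an addable box of `μ`: adjoining it yields a partition. -/
def IsAddableBox (μ : ℕ → ℕ) (a b : ℕ) : Prop :=
  1 ≤ a ∧ b = μ (a - 1) + 1 ∧ (a = 1 ∨ b ≤ μ (a - 2))

/-- `(a, b)` is a removable box of `μ`: deleting it yields a partition. -/
def IsRemovableBox (μ : ℕ → ℕ) (a b : ℕ) : Prop :=
  1 ≤ a ∧ b = μ (a - 1) ∧ 1 ≤ b ∧ μ a < b

/-- The charged content `t + b - a` of the box in row `a` and column `b`,
with respect to the charge `t`. -/
def chCont (t : ℤ) (a b : ℕ) : ℤ := t + (b : ℤ) - (a : ℤ)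

/-- Selecting the component `j ∈ {1, 2}` of a bipartition. -/
def compPart (μ₁ μ₂ : ℕ → ℕ) (j : ℕ) : ℕ → ℕ := if j = 1 then μ₁ else μ₂

/-- Selecting the component `j ∈ {1, 2}` of a pair of charges. -/
def compT (t₁ t₂ : ℤ) (j : ℕ) : ℤ := if j = 1 then t₁ else t₂

/-- The box `(a, b)` in component `j` is a good removable `i`-box of the
bipartition `(μ₁, μ₂)` with charges `(t₁, t₂)`, where `r` is the row containing
the right region: it is a removable box of charged content `≡ i (mod d)` and
there is no addable box `A` of either component with charged content `≡ i (mod d)`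
such that either `A` has strictly larger charged content, or `A` has equal
charged content and lies in component `r`. -/
def IsGoodRemovableBox (d : ℤ) (μ₁ μ₂ : ℕ → ℕ) (t₁ t₂ : ℤ) (r : ℕ) (i : ℤ)
    (j a b : ℕ) : Prop :=
  (j = 1 ∨ j = 2) ∧ IsRemovableBox (compPart μ₁ μ₂ j) a b ∧
    d ∣ chCont (compT t₁ t₂ j) a b - i ∧
    ∀ j' a' b' : ℕ, (j' = 1 ∨ j' = 2) → IsAddableBox (compPart μ₁ μ₂ j') a' b' →
      d ∣ chCont (compT t₁ t₂ j') a' b' - i →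
      ¬ (chCont (compT t₁ t₂ j) a b < chCont (compT t₁ t₂ j') a' b' ∨
        (chCont (compT t₁ t₂ j') a' b' = chCont (compT t₁ t₂ j) a b ∧ j' = r))

/-- The position of a letter in the order `× < ∧ < ∨ < ∘`. -/
def udIdx : UD → ℕ
  | UD.cross => 0
  | UD.up => 1
  | UD.dn => 2
  | UD.circ => 3

/-- The word `w₁ ⋯ w_{d/2}` reads `×^α ∧^w ∨^h ∘^β`: all `×`'s first, then all
`∧`'s, then all `∨`'s, then all `∘`'s. -/
def SortedUD (d : ℤ) (w : ℤ → UD) : Prop :=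
  ∀ i j : ℤ, 1 ≤ i → i ≤ j → j ≤ d / 2 → udIdx (w i) ≤ udIdx (w j)

/-- The number of occurrences of the letter `u` in the word `w₁ ⋯ w_{d/2}`. -/
noncomputable def countUD (d : ℤ) (w : ℤ → UD) (u : UD) : ℕ :=
  ((Finset.Icc (1 : ℤ) (d / 2)).filter fun i => w i = u).card

/-- `w'` is obtained from `w` by permuting the letters `∧` and `∨` among the
positions carrying `∧` or `∨`, leaving every `×` and `∘` in place. -/
def PermUpDn (d : ℤ) (w w' : ℤ → UD) : Prop :=
  (∀ i : ℤ, 1 ≤ i → i ≤ d / 2 →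
    ((w' i = UD.cross ↔ w i = UD.cross) ∧ (w' i = UD.circ ↔ w i = UD.circ))) ∧
  countUD d w' UD.up = countUD d w UD.up

/-- Replace every letter `∧` by `∨`, leaving the other letters unchanged. -/
def replaceUp : UD → UD
  | UD.up => UD.dn
  | u => u

/-!
A β-set is recovered from its charge and partition as `{s + λ_j - j}`; in particular `(-∞, s]`
is the β-set of charge `s` with empty partition, and `(-∞, s - h] ∪ (s + w - h, s + w]` the one
of charge `s` with partition `(w^h)`. Since `Θ` is `d`-small, each row is full below and empty
above its defining interval, so both rows are determined by the up-down diagram: the beads of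
`X_r` in its interval sit at the `×`'s and `∧`'s, those of `X_l` at the `×`'s and `∨`'s. The
word is sorted exactly when the first set is an initial segment and the second an initial
segment followed by one block, i.e. when `X_r` and `X_l` have the two shapes above; the charge
relation records the offset `kd + d/2` between the two intervals.
-/

open Set

namespace IsBetaSet

variable {X : Set ℤ}

theorem bddAbove (hX : IsBetaSet X) : BddAbove X := by
  obtain ⟨C, hC⟩ := hX.2
  exact ⟨C, fun x hx => by by_contra hxC; exact hC x (by omega) hx⟩

theorem nonempty_inter_Iio (hX : IsBetaSet X) (t : ℤ) : (X ∩ Iio t).Nonempty := by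
  obtain ⟨c, hc⟩ := hX.1
  exact ⟨min c t - 1, hc _ (by omega), by simp only [mem_Iio]; omega⟩

theorem nonempty (hX : IsBetaSet X) : X.Nonempty :=
  (hX.nonempty_inter_Iio 0).mono inter_subset_left

theorem finite_inter_Ici (hX : IsBetaSet X) (t : ℤ) : (X ∩ Ici t).Finite := by
  obtain ⟨C, hC⟩ := hX.2
  refine (finite_Ico t C).subset fun x ⟨hx, htx⟩ => ⟨htx, ?_⟩
  by_contra hCx
  exact hC x (not_lt.1 hCx) hx

theorem bddAbove_setOf_forall_lt_mem (hX : IsBetaSet X) :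
    BddAbove {z : ℤ | ∀ x < z, x ∈ X} := by
  obtain ⟨C, hC⟩ := hX.2
  exact ⟨C, fun z hz => by by_contra hzC; exact hC C le_rfl (hz C (by omega))⟩

theorem mem_of_lt_botB (hX : IsBetaSet X) {x : ℤ} (hx : x < botB X) : x ∈ X :=
  Int.csSup_mem hX.1 hX.bddAbove_setOf_forall_lt_mem x hx

theorem le_botB (hX : IsBetaSet X) {c : ℤ} (hc : ∀ x < c, x ∈ X) : c ≤ botB X :=
  le_csSup hX.bddAbove_setOf_forall_lt_mem hc

theorem chargeB_eq_of_forall_lt_mem (hX : IsBetaSet X) {c : ℤ} (hc : ∀ x < c, x ∈ X) :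
    chargeB X = ((X ∩ Ici c).ncard : ℤ) + c - 1 := by
  have hcb := hX.le_botB hc
  have hsplit : X ∩ Ici c = Ico c (botB X) ∪ (X ∩ Ici (botB X)) := by
    ext x
    simp only [mem_inter_iff, mem_Ici, mem_union, mem_Ico]
    constructor
    · rintro ⟨hx, hcx⟩
      by_cases hxb : x < botB X
      exacts [Or.inl ⟨hcx, hxb⟩, Or.inr ⟨hx, by omega⟩]
    · rintro (⟨hcx, hxb⟩ | ⟨hx, hbx⟩)
      exacts [⟨hX.mem_of_lt_botB hxb, hcx⟩, ⟨hx, by omega⟩]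
  have hdisj : Disjoint (Ico c (botB X)) (X ∩ Ici (botB X)) :=
    disjoint_left.2 fun x hx hx' => by simp only [mem_Ico, mem_inter_iff, mem_Ici] at hx hx'; omega
  rw [hsplit, ncard_union_eq hdisj (finite_Ico _ _) (hX.finite_inter_Ici _), ← Finset.coe_Ico,
    ncard_coe_finset, Int.card_Ico, chargeB]
  omega

theorem chargeB_le_ncard_inter_Ioi_add (hX : IsBetaSet X) (e : ℤ) :
    chargeB X ≤ ((X ∩ Ioi e).ncard : ℤ) + e := by
  set c := min (e + 1) (botB X)
  have hsub : X ∩ Ici c ⊆ ↑(Finset.Ico c (e + 1)) ∪ (X ∩ Ioi e) := by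
    rintro x ⟨hx, hcx⟩
    by_cases hxe : x ≤ e
    · exact Or.inl (by simp only [Finset.coe_Ico, mem_Ico]; simp only [mem_Ici] at hcx; omega)
    · exact Or.inr ⟨hx, not_le.1 hxe⟩
  have hfin : (X ∩ Ioi e).Finite := (hX.finite_inter_Ici (e + 1)).subset fun x ⟨hx, hex⟩ =>
    ⟨hx, by simp only [mem_Ioi, mem_Ici] at hex ⊢; omega⟩
  have hcard := (ncard_le_ncard hsub ((Finset.finite_toSet _).union hfin)).trans
    (ncard_union_le _ _)
  rw [ncard_coe_finset, Int.card_Ico] at hcard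
  rw [hX.chargeB_eq_of_forall_lt_mem (c := c) fun x hx => hX.mem_of_lt_botB (by omega)]
  omega

theorem elemSeq_succ_mem (hX : IsBetaSet X) (n : ℕ) :
    elemSeq X (n + 1) ∈ X ∩ Iio (elemSeq X n) :=
  Int.csSup_mem (hX.nonempty_inter_Iio _) (hX.bddAbove.mono inter_subset_left)

theorem elemSeq_mem (hX : IsBetaSet X) : ∀ n, elemSeq X n ∈ X
  | 0 => Int.csSup_mem hX.nonempty hX.bddAbove
  | n + 1 => (hX.elemSeq_succ_mem n).1

theorem strictAnti_elemSeq (hX : IsBetaSet X) : StrictAnti (elemSeq X) :=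
  strictAnti_nat_of_succ_lt fun n => (hX.elemSeq_succ_mem n).2

theorem le_elemSeq_zero (hX : IsBetaSet X) {x : ℤ} (hx : x ∈ X) : x ≤ elemSeq X 0 :=
  le_csSup hX.bddAbove hx

theorem le_elemSeq_succ (hX : IsBetaSet X) {x : ℤ} (hx : x ∈ X) {n : ℕ}
    (hxn : x < elemSeq X n) : x ≤ elemSeq X (n + 1) :=
  le_csSup (hX.bddAbove.mono inter_subset_left) ⟨hx, hxn⟩

theorem exists_elemSeq_eq (hX : IsBetaSet X) {x : ℤ} (hx : x ∈ X) : ∃ n, elemSeq X n = x := by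
  have hdrop : ∀ n : ℕ, elemSeq X n ≤ elemSeq X 0 - n := by
    intro n
    induction n with
    | zero => simp
    | succ n ih =>
      have : elemSeq X (n + 1) < elemSeq X n := (hX.elemSeq_succ_mem n).2
      push_cast
      omega
  have hex : ∃ n : ℕ, elemSeq X n ≤ x :=
    ⟨(elemSeq X 0 - x).toNat, (hdrop _).trans (by omega)⟩
  -- the first term of the sequence that is `≤ x` must equal `x`
  refine ⟨Nat.find hex, le_antisymm (Nat.find_spec hex) ?_⟩
  rcases h : Nat.find hex with _ | k
  · exact hX.le_elemSeq_zero hx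
  · exact hX.le_elemSeq_succ hx (not_le.1 (Nat.find_min hex (by omega)))

theorem inter_Ioi_elemSeq (hX : IsBetaSet X) (n : ℕ) :
    X ∩ Ioi (elemSeq X n) = elemSeq X '' Iio n := by
  ext x
  constructor
  · rintro ⟨hx, hnx⟩
    obtain ⟨k, rfl⟩ := hX.exists_elemSeq_eq hx
    exact ⟨k, hX.strictAnti_elemSeq.lt_iff_gt.1 hnx, rfl⟩
  · rintro ⟨k, hk, rfl⟩
    exact ⟨hX.elemSeq_mem k, hX.strictAnti_elemSeq hk⟩

theorem ncard_inter_Ioi_elemSeq (hX : IsBetaSet X) (n : ℕ) :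
    (X ∩ Ioi (elemSeq X n)).ncard = n := by
  rw [hX.inter_Ioi_elemSeq, ncard_image_of_injective _ hX.strictAnti_elemSeq.injective,
    ← Finset.coe_range, ncard_coe_finset, Finset.card_range]

theorem chargeB_le_elemSeq_add (hX : IsBetaSet X) (n : ℕ) : chargeB X ≤ elemSeq X n + n := by
  have := hX.chargeB_le_ncard_inter_Ioi_add (elemSeq X n)
  rw [hX.ncard_inter_Ioi_elemSeq] at this
  omega

theorem chargeB_eq_elemSeq_add (hX : IsBetaSet X) {n : ℕ} (hn : ∀ x ≤ elemSeq X n, x ∈ X) :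
    chargeB X = elemSeq X n + n := by
  have hIci : X ∩ Ici (elemSeq X n + 1) = X ∩ Ioi (elemSeq X n) := by
    ext x; simp only [mem_inter_iff, mem_Ici, mem_Ioi, Int.add_one_le_iff]
  have hcut : ∀ x < elemSeq X n + 1, x ∈ X := fun x hx => hn x (by omega)
  rw [hX.chargeB_eq_of_forall_lt_mem hcut, hIci, hX.ncard_inter_Ioi_elemSeq]
  ring

theorem coe_partB (hX : IsBetaSet X) (n : ℕ) :
    (partB X n : ℤ) = elemSeq X n - chargeB X + n := by
  have := hX.chargeB_le_elemSeq_add n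
  rw [partB]
  omega

theorem eq_betaOf (hX : IsBetaSet X) : X = betaOf (partB X) (chargeB X) := by
  ext x
  constructor
  · intro hx
    obtain ⟨n, rfl⟩ := hX.exists_elemSeq_eq hx
    exact ⟨n, by rw [hX.coe_partB]; ring⟩
  · rintro ⟨n, rfl⟩
    convert hX.elemSeq_mem n using 1
    rw [hX.coe_partB]
    ring

end IsBetaSet

namespace IsPartition

variable {μ : ℕ → ℕ}

theorem strictAnti_betaSeq (hμ : IsPartition μ) (s : ℤ) :
    StrictAnti fun j : ℕ => s + (μ j : ℤ) - j :=
  strictAnti_nat_of_succ_lt fun j => by have := hμ.1 j; push_cast; omega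

theorem isBetaSet_betaOf (hμ : IsPartition μ) (s : ℤ) : IsBetaSet (betaOf μ s) := by
  obtain ⟨N, hN⟩ := hμ.2
  refine ⟨⟨s - N, fun z hz => ⟨(s - z).toNat, ?_⟩⟩, ⟨s + μ 0 + 1, ?_⟩⟩
  · rw [hN _ (by omega)]
    omega
  · rintro z hz ⟨j, rfl⟩
    have := antitone_nat_of_succ_le hμ.1 (Nat.zero_le j)
    omega

theorem elemSeq_betaOf (hμ : IsPartition μ) (s : ℤ) (n : ℕ) :
    elemSeq (betaOf μ s) n = s + μ n - n := by
  have hanti := hμ.strictAnti_betaSeq s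
  induction n with
  | zero =>
    refine IsGreatest.csSup_eq ⟨⟨0, rfl⟩, ?_⟩
    rintro x ⟨j, rfl⟩
    exact hanti.antitone (Nat.zero_le j)
  | succ n ih =>
    refine IsGreatest.csSup_eq ⟨⟨⟨n + 1, rfl⟩, ?_⟩, ?_⟩
    · rw [mem_Iio, ih]
      exact hanti n.lt_succ_self
    · rintro x ⟨⟨j, rfl⟩, hj⟩
      rw [mem_Iio, ih] at hj
      exact hanti.antitone (Nat.succ_le_of_lt (hanti.lt_iff_gt.1 hj))

theorem chargeB_betaOf (hμ : IsPartition μ) (s : ℤ) : chargeB (betaOf μ s) = s := by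
  obtain ⟨N, hN⟩ := hμ.2
  have hlast : elemSeq (betaOf μ s) N = s - N := by
    rw [hμ.elemSeq_betaOf, hN N le_rfl]
    ring
  rw [(hμ.isBetaSet_betaOf s).chargeB_eq_elemSeq_add (n := N), hlast]
  · ring
  · intro x hx
    rw [hlast] at hx
    refine ⟨(s - x).toNat, ?_⟩
    rw [hN _ (by omega)]
    omega

theorem partB_betaOf (hμ : IsPartition μ) (s : ℤ) : partB (betaOf μ s) = μ := by
  funext n
  rw [partB, hμ.elemSeq_betaOf, hμ.chargeB_betaOf]
  omega

end IsPartition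

theorem isPartition_zero : IsPartition 0 :=
  ⟨fun _ => le_rfl, 0, fun _ _ => rfl⟩

theorem mem_betaOf_zero {s x : ℤ} : x ∈ betaOf 0 s ↔ x ≤ s := by
  constructor
  · rintro ⟨j, rfl⟩
    simp
  · intro hx
    exact ⟨(s - x).toNat, by simp only [Pi.zero_apply]; omega⟩

def rectPartition (w h : ℕ) (j : ℕ) : ℕ := if j < h then w else 0

theorem isPartition_rectPartition (w h : ℕ) : IsPartition (rectPartition w h) := by
  refine ⟨fun j => ?_, h, fun j hj => if_neg (by omega)⟩
  unfold rectPartition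
  split_ifs <;> omega

theorem mem_betaOf_rectPartition {w h : ℕ} {s x : ℤ} :
    x ∈ betaOf (rectPartition w h) s ↔ x ≤ s - h ∨ (s + w - h < x ∧ x ≤ s + w) := by
  unfold betaOf rectPartition
  constructor
  · rintro ⟨j, rfl⟩
    split_ifs <;> omega
  · rintro (hx | hx)
    · exact ⟨(s - x).toNat, by rw [if_neg (by omega)]; omega⟩
    · exact ⟨(s + w - x).toNat, by rw [if_pos (by omega)]; omega⟩

theorem exists_shape_iff_partB_chargeB {R L : Set ℤ} (hR : IsBetaSet R) (hL : IsBetaSet L) (w h : ℕ) (δ : ℤ) :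
    (∃ s : ℤ, (∀ x, x ∈ R ↔ x ≤ s + w - h + δ) ∧
      ∀ x, x ∈ L ↔ x ≤ s - h ∨ (s + w - h < x ∧ x ≤ s + w)) ↔
    ((∀ j, partB R j = 0) ∧ (∀ j, partB L j = if j < h then w else 0) ∧
      chargeB R = chargeB L + w - h + δ) := by
  constructor
  · rintro ⟨s, hRs, hLs⟩
    obtain rfl : R = betaOf 0 (s + w - h + δ) := ext fun x => (hRs x).trans mem_betaOf_zero.symm
    obtain rfl : L = betaOf (rectPartition w h) s :=
      ext fun x => (hLs x).trans mem_betaOf_rectPartition.symm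
    refine ⟨fun j => ?_, fun j => ?_, ?_⟩
    · rw [isPartition_zero.partB_betaOf]
      rfl
    · rw [(isPartition_rectPartition w h).partB_betaOf]
      rfl
    · rw [isPartition_zero.chargeB_betaOf, (isPartition_rectPartition w h).chargeB_betaOf]
  · rintro ⟨hRμ, hLμ, hch⟩
    refine ⟨chargeB L, fun x => ?_, fun x => ?_⟩
    · conv_lhs => rw [hR.eq_betaOf]
      rw [show partB R = 0 from funext hRμ, mem_betaOf_zero, hch]
    · conv_lhs => rw [hL.eq_betaOf]
      rw [show partB L = rectPartition w h from funext hLμ, mem_betaOf_rectPartition]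

theorem mem_iff_of_window {X : Set ℤ} {a n : ℤ} {P : ℤ → Prop} (hbot : ∀ x ≤ a, x ∈ X)
    (htop : ∀ x ∈ X, x ≤ a + n) (hwin : ∀ i, 1 ≤ i → i ≤ n → (a + i ∈ X ↔ P i)) (x : ℤ) :
    x ∈ X ↔ x ≤ a ∨ (a < x ∧ x ≤ a + n ∧ P (x - a)) := by
  rcases le_or_gt x a with hxa | hax
  · exact iff_of_true (hbot x hxa) (Or.inl hxa)
  rcases le_or_gt x (a + n) with hxn | hnx
  · rw [← hwin (x - a) (by omega) (by omega), add_sub_cancel]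
    simp only [not_le.2 hax, hax, hxn, true_and, false_or]
  · exact iff_of_false (fun hx => by have := htop x hx; omega) (by omega)

theorem le_card_filter_Icc_iff {n : ℤ} {P : ℤ → Prop} [DecidablePred P]
    (hP : ∀ i j, 1 ≤ i → i ≤ j → j ≤ n → P j → P i) {i : ℤ} (hi : 1 ≤ i) (hin : i ≤ n) :
    P i ↔ i ≤ ((Finset.Icc 1 n).filter P).card := by
  constructor
  · intro hPi
    have hsub : Finset.Icc 1 i ⊆ (Finset.Icc 1 n).filter P := fun j hj => by
      rw [Finset.mem_Icc] at hj
      exact Finset.mem_filter.2 ⟨Finset.mem_Icc.2 ⟨hj.1, by omega⟩, hP j i hj.1 hj.2 hin hPi⟩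
    have := Finset.card_le_card hsub
    rw [Int.card_Icc] at this
    omega
  · intro hle
    by_contra hPi
    have hsub : (Finset.Icc 1 n).filter P ⊆ Finset.Icc 1 (i - 1) := fun j hj => by
      rw [Finset.mem_filter, Finset.mem_Icc] at hj
      refine Finset.mem_Icc.2 ⟨hj.1.1, ?_⟩
      by_contra hji
      exact hPi (hP i j hi (by omega) hj.1.2 hj.2)
    have := Finset.card_le_card hsub
    rw [Int.card_Icc] at this
    omega

theorem udIdx_injective : Function.Injective udIdx := by
  intro u v
  cases u <;> cases v <;> simp [udIdx]

noncomputable def countUDLE (d : ℤ) (W : ℤ → UD) (k : ℕ) : ℕ :=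
  ((Finset.Icc 1 (d / 2)).filter fun i => udIdx (W i) ≤ k).card

theorem countUDLE_succ {d : ℤ} {W : ℤ → UD} {u : UD} {k : ℕ} (hu : udIdx u = k + 1) :
    countUDLE d W (k + 1) = countUDLE d W k + countUD d W u := by
  rw [countUDLE, countUDLE, countUD, ← Finset.card_union_of_disjoint, ← Finset.filter_or]
  · congr 1
    refine Finset.filter_congr fun i _ => ?_
    rw [← udIdx_injective.eq_iff, hu]
    omega
  · exact Finset.disjoint_filter.2 fun i _ hle heq => by rw [heq, hu] at hle; omega

theorem countUDLE_le (d : ℤ) (W : ℤ → UD) (k : ℕ) : (countUDLE d W k : ℤ) ≤ max (d / 2) 0 := by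
  have := Finset.card_filter_le (Finset.Icc 1 (d / 2)) fun i => udIdx (W i) ≤ k
  rw [Int.card_Icc] at this
  rw [countUDLE]
  omega

theorem SortedUD.le_countUDLE_iff {d : ℤ} {W : ℤ → UD} (hs : SortedUD d W) (k : ℕ) {i : ℤ}
    (hi : 1 ≤ i) (hid : i ≤ d / 2) : udIdx (W i) ≤ k ↔ i ≤ countUDLE d W k :=
  le_card_filter_Icc_iff (fun i j hi hij hj hWj => (hs i j hi hij hj).trans hWj) hi hid

section Diagram

variable {d M m : ℤ} {R L : Set ℤ} {W : ℤ → UD}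

/-- The letter at position `i` records whether the `i`-th bead positions of the windows
`(M - d/2, M]` of `R` and `(m - d/2, m]` of `L` are occupied. -/
def IsDiagramOf (d M m : ℤ) (R L : Set ℤ) (W : ℤ → UD) : Prop :=
  ∀ i, udIdx (W i) = (if M - d / 2 + i ∈ R then 0 else 2) + (if m - d / 2 + i ∈ L then 0 else 1)

theorem IsDiagramOf.mem_right_iff (hW : IsDiagramOf d M m R L W) (i : ℤ) :
    M - d / 2 + i ∈ R ↔ udIdx (W i) ≤ 1 := by
  rw [hW i]
  split_ifs with hA <;> simp [hA]

theorem IsDiagramOf.mem_left_iff (hW : IsDiagramOf d M m R L W) (i : ℤ) :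
    m - d / 2 + i ∈ L ↔ udIdx (W i) ≤ 0 ∨ (1 < udIdx (W i) ∧ udIdx (W i) ≤ 2) := by
  rw [hW i]
  split_ifs with hA hB hB <;> simp [hB]

theorem IsDiagramOf.sortedUD_iff (hW : IsDiagramOf d M m R L W)
    (hRbot : ∀ x ≤ M - d / 2, x ∈ R) (hRtop : ∀ x ∈ R, x ≤ M)
    (hLbot : ∀ x ≤ m - d / 2, x ∈ L) (hLtop : ∀ x ∈ L, x ≤ m) :
    SortedUD d W ↔ ∃ s : ℤ,
      (∀ x, x ∈ R ↔ x ≤ s + countUD d W .up - countUD d W .dn + (M - m)) ∧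
      ∀ x, x ∈ L ↔ x ≤ s - countUD d W .dn ∨
        (s + countUD d W .up - countUD d W .dn < x ∧ x ≤ s + countUD d W .up) := by
  constructor
  · intro hs
    have hd : 0 ≤ d / 2 := by have := hRtop _ (hRbot _ le_rfl); omega
    have h1 : countUDLE d W 1 = countUDLE d W 0 + countUD d W .up := countUDLE_succ rfl
    have h2 : countUDLE d W 2 = countUDLE d W 1 + countUD d W .dn := countUDLE_succ rfl
    have hle := countUDLE_le d W 2
    -- `s - h` is the last bead of the initial run of `L`, read off the run of `×`'s
    refine ⟨m - d / 2 + countUDLE d W 0 + countUD d W .dn, fun x => ?_, fun x => ?_⟩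
    · rw [mem_iff_of_window hRbot (fun x hx => by have := hRtop x hx; omega)
        (n := d / 2) (P := fun i => i ≤ countUDLE d W 1)
        fun i hi hid => (hW.mem_right_iff i).trans (hs.le_countUDLE_iff 1 hi hid)]
      omega
    · rw [mem_iff_of_window hLbot (fun x hx => by have := hLtop x hx; omega)
        (n := d / 2)
        (P := fun i => i ≤ countUDLE d W 0 ∨ (countUDLE d W 1 < i ∧ i ≤ countUDLE d W 2))
        fun i hi hid => by
          rw [hW.mem_left_iff, hs.le_countUDLE_iff 0 hi hid, hs.le_countUDLE_iff 2 hi hid,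
            ← not_le, hs.le_countUDLE_iff 1 hi hid, not_le]]
      omega
  · rintro ⟨s, hRs, hLs⟩ i j hi hij hj
    rw [hW i, hW j, hRs, hRs, hLs, hLs]
    split_ifs <;> omega

end Diagram

theorem IsBetaSet.window {X : Set ℤ} (hX : IsBetaSet X) {d a b : ℤ} (hlen : b - a = d / 2 - 1)
    (hbot : a ≤ botB X) (htop : topB X ≤ b) :
    (∀ x ≤ b - d / 2, x ∈ X) ∧ ∀ x ∈ X, x ≤ b :=
  ⟨fun x hx => hX.mem_of_lt_botB (by omega), fun x hx => (le_csSup hX.bddAbove hx).trans htop⟩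

namespace IsDSmallWith

variable {d : ℤ} {X₁ X₂ : Set ℤ} {a₁ b₁ a₂ b₂ : ℤ}

theorem window (hsm : IsDSmallWith d X₁ X₂ a₁ b₁ a₂ b₂) (hX₁ : IsBetaSet X₁)
    (hX₂ : IsBetaSet X₂) :
    ((∀ x ≤ max b₁ b₂ - d / 2, x ∈ rightSet X₁ X₂ b₁ b₂) ∧
      ∀ x ∈ rightSet X₁ X₂ b₁ b₂, x ≤ max b₁ b₂) ∧
    ((∀ x ≤ min b₁ b₂ - d / 2, x ∈ leftSet X₁ X₂ b₁ b₂) ∧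
      ∀ x ∈ leftSet X₁ X₂ b₁ b₂, x ≤ min b₁ b₂) := by
  have h₁ := hX₁.window hsm.len₁ hsm.bot₁ hsm.top₁
  have h₂ := hX₂.window hsm.len₂ hsm.bot₂ hsm.top₂
  unfold rightSet leftSet
  split_ifs with hb
  · rw [max_eq_right hb.le, min_eq_left hb.le]
    exact ⟨h₂, h₁⟩
  · rw [max_eq_left (not_lt.1 hb), min_eq_right (not_lt.1 hb)]
    exact ⟨h₁, h₂⟩

end IsDSmallWith

theorem isDiagramOf_wud (d : ℤ) (X₁ X₂ : Set ℤ) (b₁ b₂ : ℤ) :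
    IsDiagramOf d (max b₁ b₂) (min b₁ b₂) (rightSet X₁ X₂ b₁ b₂) (leftSet X₁ X₂ b₁ b₂)
      (wud d X₁ X₂ b₁ b₂) := by
  intro i
  have hshift : max b₁ b₂ - d / 2 + i - |b₂ - b₁| = min b₁ b₂ - d / 2 + i := by
    rw [← max_sub_min_eq_abs]
    ring
  unfold wud
  rw [hshift]
  split_ifs <;> rfl

theorem isBetaSet_rightSet {X₁ X₂ : Set ℤ} (hX₁ : IsBetaSet X₁) (hX₂ : IsBetaSet X₂) (b₁ b₂ : ℤ) :
    IsBetaSet (rightSet X₁ X₂ b₁ b₂) := by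
  unfold rightSet
  split_ifs
  exacts [hX₂, hX₁]

theorem isBetaSet_leftSet {X₁ X₂ : Set ℤ} (hX₁ : IsBetaSet X₁) (hX₂ : IsBetaSet X₂) (b₁ b₂ : ℤ) :
    IsBetaSet (leftSet X₁ X₂ b₁ b₂) := by
  unfold leftSet
  split_ifs
  exacts [hX₁, hX₂]

theorem stmt3_general (d : ℤ)
    (X₁ X₂ : Set ℤ) (hX₁ : IsBetaSet X₁) (hX₂ : IsBetaSet X₂)
    (a₁ b₁ a₂ b₂ : ℤ) (hsm : IsDSmallWith d X₁ X₂ a₁ b₁ a₂ b₂)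
    (w h : ℕ)
    (hw : w = countUD d (wud d X₁ X₂ b₁ b₂) UD.up)
    (hh : h = countUD d (wud d X₁ X₂ b₁ b₂) UD.dn) :
    SortedUD d (wud d X₁ X₂ b₁ b₂) ↔
      ((∀ j : ℕ, partB (rightSet X₁ X₂ b₁ b₂) j = 0) ∧
       (∀ j : ℕ, partB (leftSet X₁ X₂ b₁ b₂) j = if j < h then w else 0) ∧
       chargeB (rightSet X₁ X₂ b₁ b₂) =
         chargeB (leftSet X₁ X₂ b₁ b₂) + (w : ℤ) - (h : ℤ) + middleLen d b₁ b₂ + d / 2) := by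
  obtain ⟨⟨hRbot, hRtop⟩, hLbot, hLtop⟩ := hsm.window hX₁ hX₂
  have hkd : middleLen d b₁ b₂ + d / 2 = max b₁ b₂ - min b₁ b₂ := by
    rw [middleLen, max_sub_min_eq_abs]
    ring
  subst hw hh
  rw [(isDiagramOf_wud d X₁ X₂ b₁ b₂).sortedUD_iff hRbot hRtop hLbot hLtop,
    exists_shape_iff_partB_chargeB (isBetaSet_rightSet hX₁ hX₂ b₁ b₂) (isBetaSet_leftSet hX₁ hX₂ b₁ b₂),
    add_assoc _ (middleLen d b₁ b₂), hkd]

/-- For a `d`-small symbol `Θ = (X₁,X₂)` with defining intervals,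
with `w` the number of `∧`'s and `h` the number of `∨`'s in `w_ud(Θ)`:
`w_ud(Θ) = ×^α ∧^w ∨^h ∘^β` if and only if `λ(X_r) = ∅`, `λ(X_l) = (w^h)` and
`s(X_r) = s(X_l) + w - h + kd + d/2`. -/
theorem stmt3 (d : ℤ) (hd : 2 ≤ d) (hdE : Even d)
    (X₁ X₂ : Set ℤ) (hX₁ : IsBetaSet X₁) (hX₂ : IsBetaSet X₂)
    (a₁ b₁ a₂ b₂ : ℤ) (hsm : IsDSmallWith d X₁ X₂ a₁ b₁ a₂ b₂)
    (w h : ℕ)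
    (hw : w = countUD d (wud d X₁ X₂ b₁ b₂) UD.up)
    (hh : h = countUD d (wud d X₁ X₂ b₁ b₂) UD.dn) :
    SortedUD d (wud d X₁ X₂ b₁ b₂) ↔
      ((∀ j : ℕ, partB (rightSet X₁ X₂ b₁ b₂) j = 0) ∧
       (∀ j : ℕ, partB (leftSet X₁ X₂ b₁ b₂) j = if j < h then w else 0) ∧
       chargeB (rightSet X₁ X₂ b₁ b₂) =
         chargeB (leftSet X₁ X₂ b₁ b₂) + (w : ℤ) - (h : ℤ) + middleLen d b₁ b₂ + d / 2) :=
  stmt3_general d X₁ X₂ hX₁ hX₂ a₁ b₁ a₂ b₂ hsm w h hw hh
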